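/- arXiv:1711.01785 — 2 statements merged into one kernel-verified Lean document; each statement's English description precedes it below -/
import Mathlib

section
/- Let k be a field, A a finite-dimensional k-algebra, and U ⊆ T two torsion classes in mod A. Then T = U if and only if there exists no brick S with S ∈ T and Hom_A(U', S) = 0 for every U' ∈ U. -/
universe u

/-- A torsion class in the category `mod A` of finitely generated `A`-modules:
a class of finitely generated modules, containing the zero modules, closed under
isomorphism, images of surjective homomorphisms (factor modules) and extensions. -/
def IsTorsionClass (A : Type u) [Ring A] (T : Set (ModuleCat.{u} A)) : Prop :=
  (∀ M ∈ T, Module.Finite A M) ∧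
  (∀ M : ModuleCat.{u} A, Subsingleton M → M ∈ T) ∧
  (∀ M N : ModuleCat.{u} A, M ∈ T → Nonempty (M ≃ₗ[A] N) → N ∈ T) ∧
  (∀ (M N : ModuleCat.{u} A) (f : M →ₗ[A] N), Function.Surjective f → M ∈ T → N ∈ T) ∧
  (∀ (M : ModuleCat.{u} A) (S : Submodule A M),
     ModuleCat.of A S ∈ T → ModuleCat.of A (M ⧸ S) ∈ T → M ∈ T)

/-- The smallest torsion class containing a class `C` of modules: the intersection of
all torsion classes containing `C`. -/
def torsGen (A : Type u) [Ring A] (C : Set (ModuleCat.{u} A)) : Set (ModuleCat.{u} A) :=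
  ⋂₀ {T | IsTorsionClass A T ∧ C ⊆ T}

/-- A brick: a nonzero finitely generated module all of whose nonzero endomorphisms are
invertible. -/
def IsBrick (A : Type u) [Ring A] (S : ModuleCat.{u} A) : Prop :=
  Nontrivial S ∧ Module.Finite A S ∧ ∀ f : S →ₗ[A] S, f ≠ 0 → Function.Bijective f

/-!
Suppose `T ≠ U` and pick `N ∈ T \ U` of minimal length; every proper quotient of `N` lies in
`T`, hence in `U`. If `f : U' → N` with `U' ∈ U` were nonzero, `N` would be an extension of
`N / im f ∈ U` by `im f ∈ U`, so `N ∈ U`. If a nonzero endomorphism `f` of `N` had a kernel,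
its image `N / ker f ∈ U` would give such a nonzero map `im f → N`. So nonzero endomorphisms
of `N` are injective, hence bijective since `N` is artinian: `N` is a brick in `T ∩ U^⊥`.
-/

namespace IsTorsionClass

variable {A : Type u} [Ring A] {T : Set (ModuleCat.{u} A)}

theorem finite (hT : IsTorsionClass A T) {M : ModuleCat.{u} A} (hM : M ∈ T) :
    Module.Finite A M :=
  hT.1 M hM

theorem mem_of_subsingleton (hT : IsTorsionClass A T) (M : ModuleCat.{u} A) [Subsingleton M] :
    M ∈ T :=
  hT.2.1 M ‹_›

theorem mem_of_linearEquiv (hT : IsTorsionClass A T) {M N : ModuleCat.{u} A} (hM : M ∈ T)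
    (e : M ≃ₗ[A] N) : N ∈ T :=
  hT.2.2.1 M N hM ⟨e⟩

theorem mem_of_surjective (hT : IsTorsionClass A T) {M N : ModuleCat.{u} A} (hM : M ∈ T)
    (f : M →ₗ[A] N) (hf : Function.Surjective f) : N ∈ T :=
  hT.2.2.2.1 M N f hf hM

theorem mem_of_submodule_of_quotient (hT : IsTorsionClass A T) {M : ModuleCat.{u} A}
    {K : Submodule A M} (hK : ModuleCat.of A K ∈ T) (hMK : ModuleCat.of A (M ⧸ K) ∈ T) :
    M ∈ T :=
  hT.2.2.2.2 M K hK hMK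

theorem quotient_mem (hT : IsTorsionClass A T) {M : ModuleCat.{u} A} (hM : M ∈ T)
    (K : Submodule A M) : ModuleCat.of A (M ⧸ K) ∈ T :=
  hT.mem_of_surjective hM K.mkQ K.mkQ_surjective

theorem range_mem (hT : IsTorsionClass A T) {M N : ModuleCat.{u} A} (hM : M ∈ T)
    (f : M →ₗ[A] N) : ModuleCat.of A (LinearMap.range f) ∈ T :=
  hT.mem_of_surjective hM f.rangeRestrict f.surjective_rangeRestrict

variable {N : ModuleCat.{u} A}

theorem hom_eq_zero_of_forall_quotient_mem (hT : IsTorsionClass A T) (hN : N ∉ T)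
    (hquot : ∀ K : Submodule A N, K ≠ ⊥ → ModuleCat.of A (N ⧸ K) ∈ T)
    {M : ModuleCat.{u} A} (hM : M ∈ T) (f : M →ₗ[A] N) : f = 0 := by
  by_contra hf
  exact hN (hT.mem_of_submodule_of_quotient (hT.range_mem hM f)
    (hquot _ (mt LinearMap.range_eq_bot.1 hf)))

theorem injective_of_forall_quotient_mem (hT : IsTorsionClass A T) (hN : N ∉ T)
    (hquot : ∀ K : Submodule A N, K ≠ ⊥ → ModuleCat.of A (N ⧸ K) ∈ T)
    {f : N →ₗ[A] N} (hf : f ≠ 0) : Function.Injective f := by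
  by_contra hinj
  have hrange : ModuleCat.of A (LinearMap.range f) ∈ T :=
    hT.mem_of_linearEquiv (hquot _ (mt LinearMap.ker_eq_bot.1 hinj)) f.quotKerEquivRange
  have hincl := hT.hom_eq_zero_of_forall_quotient_mem hN hquot hrange (LinearMap.range f).subtype
  apply hf
  rw [← LinearMap.subtype_comp_codRestrict f _ (LinearMap.mem_range_self f), hincl,
    LinearMap.zero_comp]

theorem isBrick_of_forall_quotient_mem [Module.Finite A N] [IsArtinian A N]
    (hT : IsTorsionClass A T) (hN : N ∉ T)
    (hquot : ∀ K : Submodule A N, K ≠ ⊥ → ModuleCat.of A (N ⧸ K) ∈ T) : IsBrick A N :=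
  ⟨not_subsingleton_iff_nontrivial.1 fun _ ↦ hN (hT.mem_of_subsingleton N), ‹_›,
    fun _ hf ↦ IsArtinian.bijective_of_injective_endomorphism _
      (hT.injective_of_forall_quotient_mem hN hquot hf)⟩

theorem subset_of_not_exists_brick [IsArtinianRing A] [IsNoetherianRing A]
    {U : Set (ModuleCat.{u} A)} (hT : IsTorsionClass A T) (hU : IsTorsionClass A U)
    (hbrick : ¬ ∃ S : ModuleCat.{u} A, IsBrick A S ∧ S ∈ T ∧
      ∀ U' ∈ U, ∀ f : U' →ₗ[A] S, f = 0) : T ⊆ U := by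
  intro N
  induction N using
    (wellFounded_lt.onFun (f := fun N : ModuleCat.{u} A ↦ Module.length A N)).induction with
  | _ N ih =>
    intro hNT
    by_contra hNU
    have := hT.finite hNT
    have hquot (K : Submodule A N) (hK : K ≠ ⊥) : ModuleCat.of A (N ⧸ K) ∈ U :=
      ih _ (K.length_quotient_lt hK) (hT.quotient_mem hNT K)
    exact hbrick ⟨N, hU.isBrick_of_forall_quotient_mem hNU hquot, hNT,
      fun _ hU' ↦ hU.hom_eq_zero_of_forall_quotient_mem hNU hquot hU'⟩

end IsTorsionClass

/-- For torsion classes `U ⊆ T` in `mod A`, one has `T = U` if and only if there is no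
brick `S` with `S ∈ T` and `Hom_A(U', S) = 0` for every `U' ∈ U`. -/
theorem tors_eq_iff_no_brick (k A : Type u) [Field k] [Ring A] [Algebra k A]
    [FiniteDimensional k A]
    (T U : Set (ModuleCat.{u} A)) (hT : IsTorsionClass A T) (hU : IsTorsionClass A U)
    (hUT : U ⊆ T) :
    T = U ↔ ¬ ∃ S : ModuleCat.{u} A, IsBrick A S ∧ S ∈ T ∧
      ∀ U' ∈ U, ∀ f : U' →ₗ[A] S, f = 0 := by
  have := IsArtinianRing.of_finite k A
  have := IsNoetherianRing.of_finite k A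
  refine ⟨?_, fun hbrick ↦ (hT.subset_of_not_exists_brick hU hbrick).antisymm hUT⟩
  rintro rfl ⟨S, ⟨_, -⟩, hST, hhom⟩
  exact one_ne_zero (hhom S hST (1 : Module.End A S))
end

section
/- Let k be a field and A a finite-dimensional k-algebra. The assignment S ↦ T(S), sending a brick S to the smallest torsion class containing S, induces a bijection from isomorphism classes of bricks in mod A to completely join-irreducible torsion classes: (i) for every brick S, T(S) is completely join-irreducible; (ii) every completely join-irreducible torsion class equals T(S) for some brick S; (iii) if S and S' are bricks with T(S) = T(S'), then S ≅ S'. -/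
universe u

/-! For a brick `B`, the modules all of whose nonzero maps to `B` are onto form a torsion class,
so every nonzero map from a module of `torsGen A {B}` to `B` is onto. Dually, a nonzero module
in `torsGen A C` receives a nonzero map from some member of `C`, since the modules with no
nonzero map to it form a torsion class. This gives (i): some member `U` of `𝒮` maps nontrivially,
hence onto, `B`, so `torsGen A {B} ⊆ U`. It gives (iii): two bricks generating the same torsion
class map onto each other, and the composite is a nonzero endomorphism, hence invertible.

For (ii), let `T'` be the join of the torsion classes strictly below `T`; join-irreducibility gives
`T' ≠ T`. A module `M` of minimal length in `T \ T'` is a brick: a nonzero, non-surjective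
endomorphism would make `M` an extension of its image by its cokernel, two strictly shorter
modules of `T`, hence of `T'`. Finite length is where the finite dimension of `A` enters. -/

open Function

def IsCompletelyJoinIrreducible (A : Type u) [Ring A] (T : Set (ModuleCat.{u} A)) : Prop :=
  ∀ 𝒮 : Set (Set (ModuleCat.{u} A)), (∀ U ∈ 𝒮, IsTorsionClass A U) →
    torsGen A (⋃₀ 𝒮) = T → T ∈ 𝒮

variable {A : Type u} [Ring A]

namespace IsTorsionClass

lemma of_quotient {T : Set (ModuleCat.{u} A)} (hfin : ∀ M ∈ T, Module.Finite A M)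
    (hzero : ∀ M : ModuleCat.{u} A, Subsingleton M → M ∈ T)
    (hquot : ∀ (M N : ModuleCat.{u} A) (f : M →ₗ[A] N), Surjective f → M ∈ T → N ∈ T)
    (hext : ∀ (M : ModuleCat.{u} A) (S : Submodule A M),
      ModuleCat.of A S ∈ T → ModuleCat.of A (M ⧸ S) ∈ T → M ∈ T) :
    IsTorsionClass A T :=
  ⟨hfin, hzero, fun M N hM ⟨e⟩ => hquot M N e e.surjective hM, hquot, hext⟩

lemma sInter {F : Set (Set (ModuleCat.{u} A))} (hF : F.Nonempty)
    (h : ∀ T ∈ F, IsTorsionClass A T) : IsTorsionClass A (⋂₀ F) := by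
  obtain ⟨T₀, hT₀⟩ := hF
  exact ⟨fun M hM => (h T₀ hT₀).1 M (hM T₀ hT₀),
    fun M hM U hU => (h U hU).2.1 M hM,
    fun M N hM he U hU => (h U hU).2.2.1 M N (hM U hU) he,
    fun M N f hf hM U hU => (h U hU).2.2.2.1 M N f hf (hM U hU),
    fun M S h₁ h₂ U hU => (h U hU).2.2.2.2 M S (h₁ U hU) (h₂ U hU)⟩

end IsTorsionClass

lemma isTorsionClass_setOf_finite :
    IsTorsionClass A {M : ModuleCat.{u} A | Module.Finite A M} :=
  .of_quotient (fun _ hM => hM) (fun _ _ => Module.Finite.of_finite)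
    (fun M _ f hf (_ : Module.Finite A M) => Module.Finite.of_surjective f hf)
    (fun M S h₁ h₂ => by
      change Module.Finite A M
      rw [Module.finite_def]
      refine Submodule.fg_of_fg_map_of_fg_inf_ker S.mkQ ?_ ?_
      · rw [Submodule.map_top, Submodule.range_mkQ]
        exact h₂.fg_top
      · rw [top_inf_eq, Submodule.ker_mkQ]
        exact Module.Finite.iff_fg.mp h₁)

lemma subset_torsGen (C : Set (ModuleCat.{u} A)) : C ⊆ torsGen A C :=
  fun _ hM _ hT => hT.2 hM

lemma torsGen_subset {C T : Set (ModuleCat.{u} A)} (hT : IsTorsionClass A T) (hC : C ⊆ T) :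
    torsGen A C ⊆ T :=
  Set.sInter_subset_of_mem ⟨hT, hC⟩

lemma isTorsionClass_torsGen {C : Set (ModuleCat.{u} A)} (hC : ∀ M ∈ C, Module.Finite A M) :
    IsTorsionClass A (torsGen A C) :=
  .sInter ⟨_, isTorsionClass_setOf_finite, hC⟩ fun _ hT => hT.1

lemma isTorsionClass_torsGen_singleton {M : ModuleCat.{u} A} (hM : Module.Finite A M) :
    IsTorsionClass A (torsGen A {M}) :=
  isTorsionClass_torsGen fun _ hN => hN ▸ hM

/-- For `𝒰 = ∅` this is the class of modules without nonzero maps to `B`, for `𝒰 = {⊤}`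
the class of modules all of whose nonzero maps to `B` are surjective. -/
lemma isTorsionClass_setOf_forall_eq_bot_or_range_mem (B : ModuleCat.{u} A)
    {𝒰 : Set (Submodule A B)} (h𝒰 : IsUpperSet 𝒰) :
    IsTorsionClass A {X : ModuleCat.{u} A | Module.Finite A X ∧
      ∀ f : X →ₗ[A] B, LinearMap.range f = ⊥ ∨ LinearMap.range f ∈ 𝒰} := by
  refine .of_quotient (fun _ hX => hX.1) (fun X _ => ⟨Module.Finite.of_finite, fun f => ?_⟩)
    (fun X Y g hg hX => ⟨have := hX.1; Module.Finite.of_surjective g hg, fun f => ?_⟩)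
    (fun M S h₁ h₂ => ⟨?_, fun f => ?_⟩)
  · exact .inl (by rw [Subsingleton.elim f 0, LinearMap.range_zero])
  · have := hX.2 (f ∘ₗ g)
    rwa [LinearMap.range_comp_of_range_eq_top f (LinearMap.range_eq_top.2 hg)] at this
  · exact isTorsionClass_setOf_finite.2.2.2.2 M S h₁.1 h₂.1
  · rcases h₁.2 (f ∘ₗ S.subtype) with h | h
    · -- `f` vanishes on `S`, so it factors through `M ⧸ S` with the same range
      have hS : S ≤ LinearMap.ker f := by
        rwa [LinearMap.range_comp, Submodule.range_subtype, ← LinearMap.le_ker_iff_map] at h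
      simpa only [Submodule.range_liftQ] using h₂.2 (S.liftQ f hS)
    · exact .inr (h𝒰 (by simp only [LinearMap.range_comp, Submodule.range_subtype,
        LinearMap.map_le_range]) h)

lemma exists_ne_zero_of_mem_torsGen {C : Set (ModuleCat.{u} A)}
    (hC : ∀ M ∈ C, Module.Finite A M) {B : ModuleCat.{u} A} [Nontrivial B]
    (hB : B ∈ torsGen A C) : ∃ X ∈ C, ∃ f : X →ₗ[A] B, f ≠ 0 := by
  by_contra! h
  have hsub := torsGen_subset
    (isTorsionClass_setOf_forall_eq_bot_or_range_mem B (isUpperSet_empty (α := Submodule A B)))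
    fun X hX => ⟨hC X hX, fun f => .inl (by rw [h X hX f, LinearMap.range_zero])⟩
  simpa using (hsub hB).2 LinearMap.id

namespace IsBrick

variable {B : ModuleCat.{u} A}

lemma surjective_of_mem_torsGen (hB : IsBrick A B) {X : ModuleCat.{u} A}
    (hX : X ∈ torsGen A {B}) {f : X →ₗ[A] B} (hf : f ≠ 0) : Surjective f := by
  have hBmem : B ∈ {X : ModuleCat.{u} A | Module.Finite A X ∧
      ∀ f : X →ₗ[A] B, LinearMap.range f = ⊥ ∨ LinearMap.range f ∈ Set.Ici ⊤} := by
    refine ⟨hB.2.1, fun g => ?_⟩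
    rcases eq_or_ne g 0 with rfl | hg
    · exact .inl LinearMap.range_zero
    · exact .inr (LinearMap.range_eq_top.2 (hB.2.2 g hg).2).ge
  have hsub := torsGen_subset
    (isTorsionClass_setOf_forall_eq_bot_or_range_mem B (isUpperSet_Ici ⊤))
    (Set.singleton_subset_iff.2 hBmem)
  exact LinearMap.range_eq_top.1 <| top_le_iff.1 <|
    ((hsub hX).2 f).resolve_left (LinearMap.range_eq_bot.not.2 hf)

lemma isCompletelyJoinIrreducible_torsGen (hB : IsBrick A B) :
    IsCompletelyJoinIrreducible A (torsGen A {B}) := by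
  intro 𝒮 h𝒮 hjoin
  have : Nontrivial B := hB.1
  have hunion : ⋃₀ 𝒮 ⊆ torsGen A {B} := hjoin ▸ subset_torsGen _
  obtain ⟨X, ⟨U, hU, hXU⟩, f, hf⟩ := exists_ne_zero_of_mem_torsGen (C := ⋃₀ 𝒮)
    (fun X ⟨U, hU, hXU⟩ => (h𝒮 U hU).1 X hXU) (hjoin ▸ subset_torsGen {B} rfl)
  have hBU : B ∈ U :=
    (h𝒮 U hU).2.2.2.1 X B f (hB.surjective_of_mem_torsGen (hunion ⟨U, hU, hXU⟩) hf) hXU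
  have hUeq : U = torsGen A {B} :=
    ((Set.subset_sUnion_of_mem hU).trans hunion).antisymm
      (torsGen_subset (h𝒮 U hU) (Set.singleton_subset_iff.2 hBU))
  exact hUeq ▸ hU

lemma nonempty_linearEquiv_of_torsGen_eq (hB : IsBrick A B) {B' : ModuleCat.{u} A}
    (hB' : IsBrick A B') (h : torsGen A {B} = torsGen A {B'}) : Nonempty (B ≃ₗ[A] B') := by
  have : Nontrivial B := hB.1
  have : Nontrivial B' := hB'.1
  have hBB' : B ∈ torsGen A {B'} := h ▸ subset_torsGen {B} rfl
  have hB'B : B' ∈ torsGen A {B} := h ▸ subset_torsGen {B'} rfl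
  obtain ⟨_, rfl, f, hf⟩ := exists_ne_zero_of_mem_torsGen (fun _ h => h ▸ hB'.2.1) hBB'
  obtain ⟨_, rfl, g, hg⟩ := exists_ne_zero_of_mem_torsGen (fun _ h => h ▸ hB.2.1) hB'B
  have hfs : Surjective f := hB.surjective_of_mem_torsGen hB'B hf
  have hgs : Surjective g := hB'.surjective_of_mem_torsGen hBB' hg
  have hgf : f ∘ₗ g ≠ 0 := LinearMap.ne_zero_of_surjective (f := f ∘ₗ g) (hfs.comp hgs)
  have hfg_inj : Injective (f ∘ g) := (hB.2.2 _ hgf).1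
  exact ⟨.ofBijective g ⟨hfg_inj.of_comp, hgs⟩⟩

end IsBrick

section Artinian

variable [IsArtinianRing A]

lemma isBrick_of_length_minimal {T T' : Set (ModuleCat.{u} A)} (hT : IsTorsionClass A T)
    (hT' : IsTorsionClass A T') {M : ModuleCat.{u} A} (hMT : M ∈ T) (hMT' : M ∉ T')
    (hmin : ∀ N ∈ T, Module.length A N < Module.length A M → N ∈ T') : IsBrick A M := by
  have : Module.Finite A M := hT.1 M hMT
  refine ⟨not_subsingleton_iff_nontrivial.1 fun h => hMT' (hT'.2.1 M h), this, fun f hf => ?_⟩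
  suffices hs : Surjective f from ⟨IsNoetherian.injective_of_surjective_endomorphism f hs, hs⟩
  by_contra hns
  have himage : ModuleCat.of A (LinearMap.range f) ∈ T' :=
    hmin _ (hT.2.2.2.1 M _ f.rangeRestrict f.surjective_rangeRestrict hMT)
      (Submodule.length_lt (LinearMap.range_eq_top.not.2 hns))
  have hcoker : ModuleCat.of A (M ⧸ LinearMap.range f) ∈ T' :=
    hmin _ (hT.2.2.2.1 M _ (LinearMap.range f).mkQ (Submodule.mkQ_surjective _) hMT)
      ((LinearMap.range f).length_quotient_lt (LinearMap.range_eq_bot.not.2 hf))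
  exact hMT' (hT'.2.2.2.2 M _ himage hcoker)

lemma IsCompletelyJoinIrreducible.exists_isBrick {T : Set (ModuleCat.{u} A)}
    (hT_cji : IsCompletelyJoinIrreducible A T) (hT : IsTorsionClass A T) :
    ∃ S : ModuleCat.{u} A, IsBrick A S ∧ torsGen A {S} = T := by
  set 𝒮 : Set (Set (ModuleCat.{u} A)) := {U | IsTorsionClass A U ∧ U ⊆ T ∧ U ≠ T}
  have h𝒮T : ⋃₀ 𝒮 ⊆ T := Set.sUnion_subset fun U hU => hU.2.1
  set T' := torsGen A (⋃₀ 𝒮)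
  have hT' : IsTorsionClass A T' := isTorsionClass_torsGen fun M hM => hT.1 M (h𝒮T hM)
  have hT'T : T' ⊂ T := (torsGen_subset hT h𝒮T).ssubset_of_ne
    fun h => (hT_cji 𝒮 (fun U hU => hU.1) h).2.2 rfl
  obtain ⟨M, ⟨hMT, hMT'⟩, hmin⟩ :=
    (InvImage.wf (fun M : ModuleCat.{u} A => Module.length A M) wellFounded_lt).has_min
      (T \ T') (Set.exists_of_ssubset hT'T)
  have hM : IsBrick A M := isBrick_of_length_minimal hT hT' hMT hMT'
    fun N hN hlt => by_contra fun hN' => hmin N ⟨hN, hN'⟩ hlt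
  refine ⟨M, hM, by_contra fun hne => hMT' ?_⟩
  have hM𝒮 : torsGen A {M} ∈ 𝒮 := ⟨isTorsionClass_torsGen_singleton hM.2.1,
    torsGen_subset hT (Set.singleton_subset_iff.2 hMT), hne⟩
  exact subset_torsGen _ (Set.subset_sUnion_of_mem hM𝒮 (subset_torsGen {M} rfl))

end Artinian

/-- The map `S ↦ torsGen A {S}` induces a bijection from isomorphism classes of bricks
to completely join-irreducible torsion classes:
(i) for every brick `S`, `torsGen A {S}` is a completely join-irreducible torsion class;
(ii) every completely join-irreducible torsion class is of the form `torsGen A {S}` for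
some brick `S`;
(iii) bricks generating the same torsion class are isomorphic. -/
theorem bricks_biject_completely_join_irreducible_tors (k A : Type u) [Field k] [Ring A]
    [Algebra k A] [FiniteDimensional k A] :
    (∀ S : ModuleCat.{u} A, IsBrick A S →
      IsTorsionClass A (torsGen A {S}) ∧
      ∀ 𝒮 : Set (Set (ModuleCat.{u} A)), (∀ U ∈ 𝒮, IsTorsionClass A U) →
        torsGen A (⋃₀ 𝒮) = torsGen A {S} → torsGen A {S} ∈ 𝒮) ∧
    (∀ T : Set (ModuleCat.{u} A), IsTorsionClass A T →
      (∀ 𝒮 : Set (Set (ModuleCat.{u} A)), (∀ U ∈ 𝒮, IsTorsionClass A U) →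
        torsGen A (⋃₀ 𝒮) = T → T ∈ 𝒮) →
      ∃ S : ModuleCat.{u} A, IsBrick A S ∧ torsGen A {S} = T) ∧
    (∀ S S' : ModuleCat.{u} A, IsBrick A S → IsBrick A S' →
      torsGen A {S} = torsGen A {S'} → Nonempty (S ≃ₗ[A] S')) := by
  have : IsArtinianRing A := .of_finite k A
  exact ⟨fun S hS =>
      ⟨isTorsionClass_torsGen_singleton hS.2.1, hS.isCompletelyJoinIrreducible_torsGen⟩,
    fun T hT hT_cji => IsCompletelyJoinIrreducible.exists_isBrick hT_cji hT,
    fun S S' hS hS' h => hS.nonempty_linearEquiv_of_torsGen_eq hS' h⟩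
end
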